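/- Flat-space version of the first DFT algebroid identity (Lemma 2.2(1) of the paper, with the normalization fixed by the flat conventions): for all smooth sections e₁, e₂ : ℝ^{2d} → ℝ^{2d} and every smooth function f : ℝ^{2d} → ℝ, 2(⟨e₁, D⟨e₂,Df⟩⟩ − ⟨e₁, [[e₂,Df]]⟩) = (Df)^A ∂_A ⟨e₁,e₂⟩ + SC_ρ(e₁,e₂)f. -/

import Mathlib

open scoped BigOperators

noncomputable section

/-- The index involution implementing the O(d,d) metric η with matrix [[0,1],[1,0]]:
η_{AB} = 1 iff B = σd d A. -/
def σd (d : ℕ) (A : Fin (2*d)) : Fin (2*d) :=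
  if h : (A : ℕ) < d then ⟨(A : ℕ) + d, by omega⟩
  else ⟨(A : ℕ) - d, by have := A.isLt; omega⟩

/-- A section of the DFT algebroid bundle over ℝ^{2d}. -/
abbrev Sec (d : ℕ) := (Fin (2*d) → ℝ) → Fin (2*d) → ℝ

/-- Partial derivative ∂_A f at x. -/
def pd {n : ℕ} (f : (Fin n → ℝ) → ℝ) (A : Fin n) (x : Fin n → ℝ) : ℝ :=
  fderiv ℝ f x (Pi.single A 1)

/-- The pairing ⟨e₁,e₂⟩ = η_{AB} e₁^A e₂^B. -/
def pair {d : ℕ} (e₁ e₂ : Sec d) (x : Fin (2*d) → ℝ) : ℝ :=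
  ∑ A, e₁ x A * e₂ x (σd d A)

/-- The derivative D : C^∞ → Γ(L), (Df)^A = (1/2) η^{AB} ∂_B f. -/
def Dsec {d : ℕ} (f : (Fin (2*d) → ℝ) → ℝ) : Sec d :=
  fun x A => (1/2) * pd f (σd d A) x

/-- The flat C-bracket of double field theory. -/
def cbr {d : ℕ} (e₁ e₂ : Sec d) : Sec d := fun x B =>
  (∑ A, e₁ x A * pd (fun y => e₂ y B) A x
    - (1/2) * ∑ A, e₁ x A * pd (fun y => e₂ y (σd d A)) (σd d B) x)
  - (∑ A, e₂ x A * pd (fun y => e₁ y B) A x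
    - (1/2) * ∑ A, e₂ x A * pd (fun y => e₁ y (σd d A)) (σd d B) x)

/-- SC_ρ(e₁,e₂)f = (1/2) η^{BC} ∂_B f η_{AD} (e₁^A ∂_C e₂^D − e₂^A ∂_C e₁^D). -/
def SCrho {d : ℕ} (e₁ e₂ : Sec d) (f : (Fin (2*d) → ℝ) → ℝ) (x : Fin (2*d) → ℝ) : ℝ :=
  (1/2) * ∑ B, pd f B x *
    ∑ A, (e₁ x A * pd (fun y => e₂ y (σd d A)) (σd d B) x
          - e₂ x A * pd (fun y => e₁ y (σd d A)) (σd d B) x)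

/-- The Nijenhuis-type tensor N(e₁,e₂,e₃). -/
def Nform {d : ℕ} (e₁ e₂ e₃ : Sec d) (x : Fin (2*d) → ℝ) : ℝ :=
  (1/3) * (pair (cbr e₁ e₂) e₃ x + pair (cbr e₂ e₃) e₁ x + pair (cbr e₃ e₁) e₂ x)

/-- The Jacobiator of the C-bracket. -/
def Jac {d : ℕ} (e₁ e₂ e₃ : Sec d) : Sec d := fun x B =>
  cbr (cbr e₁ e₂) e₃ x B + cbr (cbr e₂ e₃) e₁ x B + cbr (cbr e₃ e₁) e₂ x B

/-- SC_Jac(e₁,e₂,e₃) = Jac(e₁,e₂,e₃) − D N(e₁,e₂,e₃). -/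
def SCJac {d : ℕ} (e₁ e₂ e₃ : Sec d) : Sec d := fun x B =>
  Jac e₁ e₂ e₃ x B - Dsec (Nform e₁ e₂ e₃) x B

lemma sigma_val (d : ℕ) (A : Fin (2*d)) :
    (σd d A : ℕ) = if (A : ℕ) < d then (A : ℕ) + d else (A : ℕ) - d := by
  unfold σd; split_ifs <;> rfl

lemma sigma_sigma (d : ℕ) (A : Fin (2*d)) : σd d (σd d A) = A := by
  have hA := A.isLt
  apply Fin.ext
  rw [sigma_val, sigma_val]
  split_ifs <;> omega

lemma sum_sigma {d : ℕ} (F : Fin (2*d) → ℝ) :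
    ∑ A, F (σd d A) = ∑ A, F A :=
  Fintype.sum_equiv (Function.Involutive.toPerm _ (sigma_sigma d)) _ _ (fun A => rfl)

lemma pd_const_mul {n : ℕ} (c : ℝ) {f : (Fin n → ℝ) → ℝ} {x : Fin n → ℝ}
    (hf : DifferentiableAt ℝ f x) (A : Fin n) :
    pd (fun y => c * f y) A x = c * pd f A x := by
  unfold pd
  rw [fderiv_const_mul hf]
  simp

lemma pd_mul {n : ℕ} {a b : (Fin n → ℝ) → ℝ} {x : Fin n → ℝ}
    (ha : DifferentiableAt ℝ a x) (hb : DifferentiableAt ℝ b x) (A : Fin n) :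
    pd (fun y => a y * b y) A x = pd a A x * b x + a x * pd b A x := by
  unfold pd
  rw [fderiv_fun_mul ha hb]
  simp [smul_eq_mul]
  ring

lemma pd_sum {n : ℕ} {ι : Type*} (s : Finset ι) {F : ι → (Fin n → ℝ) → ℝ} {x : Fin n → ℝ}
    (h : ∀ i ∈ s, DifferentiableAt ℝ (F i) x) (A : Fin n) :
    pd (fun y => ∑ i ∈ s, F i y) A x = ∑ i ∈ s, pd (F i) A x := by
  unfold pd
  rw [fderiv_fun_sum h]
  simp

lemma contDiff_pd {n : ℕ} {f : (Fin n → ℝ) → ℝ} (hf : ContDiff ℝ (⊤ : ℕ∞) f) (A : Fin n) :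
    ContDiff ℝ (⊤ : ℕ∞) (pd f A) :=
  (hf.fderiv_right (m := (⊤ : ℕ∞)) (by simp)).clm_apply contDiff_const

lemma pd_pd_symm {n : ℕ} {f : (Fin n → ℝ) → ℝ} (hf : ContDiff ℝ (⊤ : ℕ∞) f) (A B : Fin n)
    (x : Fin n → ℝ) :
    pd (pd f B) A x = pd (pd f A) B x := by
  have hd2 : Differentiable ℝ (fderiv ℝ f) :=
    (hf.fderiv_right (m := (⊤ : ℕ∞)) (by simp)).differentiable (by simp)
  have key : ∀ (v : Fin n → ℝ) (C : Fin n),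
      fderiv ℝ (fun y => fderiv ℝ f y v) x (Pi.single C 1)
        = fderiv ℝ (fderiv ℝ f) x (Pi.single C 1) v := by
    intro v C
    rw [fderiv_clm_apply (hd2 x) (differentiableAt_const v)]
    simp
  have hsymm := (hf.contDiffAt (x := x)).isSymmSndFDerivAt (n := (⊤ : ℕ∞)) (by rw [minSmoothness_of_isRCLikeNormedField]; exact WithTop.coe_le_coe.mpr (le_top : (2 : ℕ∞) ≤ ⊤))
  show fderiv ℝ (fun y => fderiv ℝ f y (Pi.single B 1)) x (Pi.single A 1)
     = fderiv ℝ (fun y => fderiv ℝ f y (Pi.single A 1)) x (Pi.single B 1)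
  rw [key, key, hsymm.eq]

lemma contDiff_Dsec {d : ℕ} {f : (Fin (2*d) → ℝ) → ℝ} (hf : ContDiff ℝ (⊤ : ℕ∞) f) :
    ContDiff ℝ (⊤ : ℕ∞) (Dsec (d := d) f) := by
  apply contDiff_pi.mpr
  intro A
  exact contDiff_const.mul (contDiff_pd hf (σd d A))

lemma pd_pair {d : ℕ} {u v : Sec d} (hu : ContDiff ℝ (⊤ : ℕ∞) u) (hv : ContDiff ℝ (⊤ : ℕ∞) v)
    (A : Fin (2*d)) (x : Fin (2*d) → ℝ) :
    pd (pair u v) A x = ∑ B, (pd (fun y => u y B) A x * v x (σd d B)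
      + u x B * pd (fun y => v y (σd d B)) A x) := by
  have hu' : ∀ B, ContDiff ℝ (⊤ : ℕ∞) (fun y => u y B) := fun B => contDiff_pi.mp hu B
  have hv' : ∀ B, ContDiff ℝ (⊤ : ℕ∞) (fun y => v y B) := fun B => contDiff_pi.mp hv B
  have : pd (pair u v) A x
      = ∑ B, pd (fun y => u y B * v y (σd d B)) A x := by
    apply pd_sum
    intro B _
    exact ((hu' B).differentiable (by simp) x).mul ((hv' (σd d B)).differentiable (by simp) x)
  rw [this]
  exact Finset.sum_congr rfl fun B _ =>
    pd_mul ((hu' B).differentiable (by simp) x) ((hv' (σd d B)).differentiable (by simp) x) A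

lemma lhs_alg {d : ℕ} (P E1 E2 : Fin (2*d) → ℝ) (Q D2 : Fin (2*d) → Fin (2*d) → ℝ)
    (hQ : ∀ A B, Q A B = Q B A) :
    2 * ((∑ C, ∑ A, E1 C * (1/2 * (D2 C A * (1/2 * P A) + E2 A * (1/2 * Q C A))))
      - ∑ C, E1 C * ((∑ A, E2 A * (1/2 * Q A C) - 1/2 * ∑ A, E2 A * (1/2 * Q C A))
          - (∑ A, (1/2 * P (σd d A)) * D2 A (σd d C)
             - 1/2 * ∑ A, (1/2 * P (σd d A)) * D2 C (σd d A))))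
    = ∑ C, ∑ A, E1 C * P A * D2 (σd d A) (σd d C) := by
  rw [← Finset.sum_sub_distrib, Finset.mul_sum]
  refine Finset.sum_congr rfl fun C _ => ?_
  have e3 : ∑ A, (1/2 * P (σd d A)) * D2 A (σd d C)
      = ∑ A, (1/2 * P A) * D2 (σd d A) (σd d C) := by
    rw [← sum_sigma (fun A => (1/2 * P A) * D2 (σd d A) (σd d C))]
    simp only [sigma_sigma]
  have e4 : ∑ A, (1/2 * P (σd d A)) * D2 C (σd d A)
      = ∑ A, (1/2 * P A) * D2 C A := by
    rw [← sum_sigma (fun A => (1/2 * P A) * D2 C A)]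
  rw [e3, e4]
  simp only [Finset.mul_sum, ← Finset.sum_sub_distrib]
  refine Finset.sum_congr rfl fun A _ => ?_
  rw [hQ A C]
  ring

lemma rhs_alg {d : ℕ} (P E1 E2 : Fin (2*d) → ℝ) (D1 D2 : Fin (2*d) → Fin (2*d) → ℝ) :
    (∑ C, (1/2 * P (σd d C)) * ∑ A, (D1 C A * E2 (σd d A) + E1 A * D2 C (σd d A)))
    + 1/2 * ∑ B, P B * ∑ A, (E1 A * D2 (σd d B) (σd d A) - E2 A * D1 (σd d B) (σd d A))
    = ∑ C, ∑ A, E1 C * P A * D2 (σd d A) (σd d C) := by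
  have r1 : (∑ C, (1/2 * P (σd d C)) * ∑ A, (D1 C A * E2 (σd d A) + E1 A * D2 C (σd d A)))
      = ∑ C, (1/2 * P C) * ∑ A, (D1 (σd d C) A * E2 (σd d A)
          + E1 A * D2 (σd d C) (σd d A)) := by
    rw [← sum_sigma (fun C => (1/2 * P C) * ∑ A, (D1 (σd d C) A * E2 (σd d A)
          + E1 A * D2 (σd d C) (σd d A)))]
    simp only [sigma_sigma]
  rw [r1]
  have r2 : ∀ C : Fin (2*d), ∑ A, D1 (σd d C) A * E2 (σd d A)
      = ∑ A, D1 (σd d C) (σd d A) * E2 A := by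
    intro C
    rw [← sum_sigma (fun A => D1 (σd d C) (σd d A) * E2 A)]
    simp only [sigma_sigma]
  conv_rhs => rw [Finset.sum_comm]
  rw [Finset.mul_sum, ← Finset.sum_add_distrib]
  refine Finset.sum_congr rfl fun C _ => ?_
  rw [Finset.sum_add_distrib, r2 C]
  simp only [Finset.mul_sum, mul_add, ← Finset.sum_add_distrib, ← Finset.sum_sub_distrib]
  refine Finset.sum_congr rfl fun A _ => ?_
  ring

/-- Flat-space version of the first DFT algebroid identity (Lemma 2.2(1)). -/
theorem dft_lemma_one {d : ℕ} (hd : 1 ≤ d) (e₁ e₂ : Sec d) (f : (Fin (2*d) → ℝ) → ℝ)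
    (he₁ : ContDiff ℝ (⊤ : ℕ∞) e₁) (he₂ : ContDiff ℝ (⊤ : ℕ∞) e₂) (hf : ContDiff ℝ (⊤ : ℕ∞) f) :
    ∀ x : Fin (2*d) → ℝ,
      2 * (pair e₁ (Dsec (pair e₂ (Dsec f))) x - pair e₁ (cbr e₂ (Dsec f)) x)
      = (∑ A, Dsec f x A * pd (pair e₁ e₂) A x) + SCrho e₁ e₂ f x := by
  intro x
  have hDf : ContDiff ℝ (⊤ : ℕ∞) (Dsec (d := d) f) := contDiff_Dsec hf
  have hg0' : ∀ B : Fin (2*d), Dsec (d := d) f x (σd d B) = 1/2 * pd f B x := by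
    intro B; simp only [Dsec, sigma_sigma]
  have hg1 : ∀ (A C : Fin (2*d)), pd (fun y => Dsec (d := d) f y (σd d C)) A x
      = 1/2 * pd (pd f C) A x := by
    intro A C
    have hfun : (fun y => Dsec (d := d) f y (σd d C)) = fun y => (1/2 : ℝ) * pd f C y := by
      funext y; simp only [Dsec, sigma_sigma]
    rw [hfun, pd_const_mul _ ((contDiff_pd hf C).differentiable (by simp) x)]
  have hg0 : ∀ A : Fin (2*d), Dsec (d := d) f x A = 1/2 * pd f (σd d A) x := fun A => rfl
  have expand : ∀ C : Fin (2*d), pd (pair e₂ (Dsec f)) C x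
      = ∑ A, (pd (fun y => e₂ y A) C x * (1/2 * pd f A x)
            + e₂ x A * (1/2 * pd (pd f A) C x)) := by
    intro C
    rw [pd_pair he₂ hDf C x]
    simp only [hg0', hg1]
  have h1 : pair e₁ (Dsec (pair e₂ (Dsec f))) x
      = ∑ C, ∑ A, e₁ x C * (1/2 * (pd (fun y => e₂ y A) C x * (1/2 * pd f A x)
          + e₂ x A * (1/2 * pd (pd f A) C x))) := by
    show ∑ C, e₁ x C * (1/2 * pd (pair e₂ (Dsec f)) (σd d (σd d C)) x) = _
    simp only [sigma_sigma]
    refine Finset.sum_congr rfl fun C _ => ?_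
    rw [expand C, Finset.mul_sum, Finset.mul_sum]
  have h2 : pair e₁ (cbr e₂ (Dsec f)) x
      = ∑ C, e₁ x C * ((∑ A, e₂ x A * (1/2 * pd (pd f C) A x)
            - 1/2 * ∑ A, e₂ x A * (1/2 * pd (pd f A) C x))
          - (∑ A, (1/2 * pd f (σd d A) x) * pd (fun y => e₂ y (σd d C)) A x
            - 1/2 * ∑ A, (1/2 * pd f (σd d A) x) * pd (fun y => e₂ y (σd d A)) C x)) := by
    show ∑ C, e₁ x C * cbr e₂ (Dsec f) x (σd d C) = _
    refine Finset.sum_congr rfl fun C _ => ?_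
    congr 1
    show (∑ A, e₂ x A * pd (fun y => Dsec (d := d) f y (σd d C)) A x
        - 1/2 * ∑ A, e₂ x A * pd (fun y => Dsec (d := d) f y (σd d A)) (σd d (σd d C)) x)
      - (∑ A, Dsec (d := d) f x A * pd (fun y => e₂ y (σd d C)) A x
        - 1/2 * ∑ A, Dsec (d := d) f x A * pd (fun y => e₂ y (σd d A)) (σd d (σd d C)) x) = _
    simp only [sigma_sigma, hg1, hg0]
  have h3 : (∑ A, Dsec f x A * pd (pair e₁ e₂) A x)
      = ∑ C, (1/2 * pd f (σd d C) x) * ∑ A, (pd (fun y => e₁ y A) C x * e₂ x (σd d A)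
          + e₁ x A * pd (fun y => e₂ y (σd d A)) C x) := by
    refine Finset.sum_congr rfl fun C _ => ?_
    rw [pd_pair he₁ he₂ C x, hg0 C]
  rw [h1, h2, h3]
  exact (lhs_alg (fun A => pd f A x) (fun A => e₁ x A) (fun A => e₂ x A)
      (fun A B => pd (pd f B) A x) (fun A B => pd (fun y => e₂ y B) A x)
      (fun A B => pd_pd_symm hf A B x)).trans
    (rhs_alg (fun A => pd f A x) (fun A => e₁ x A) (fun A => e₂ x A)
      (fun A B => pd (fun y => e₁ y B) A x) (fun A B => pd (fun y => e₂ y B) A x)).symm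

end
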